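/- arXiv:1906.12097 — 9 statements merged into one kernel-verified Lean document; each statement's English description precedes it below -/
import Mathlib

section
/- Fulton Criterion (algebraic form): Let Γ be a finite simple graph on n vertices with adjacency matrix ε, let A be a unital associative ℂ-algebra, and let u ∈ M_n(A) be a magic matrix such that u·ε = ε·u in M_n(A) (the integer entries of ε being regarded in A via the unit). If for some integer l ≥ 1 the diagonal entries of the matrix power ε^l satisfy (ε^l)_{ii} ≠ (ε^l)_{jj}, then u_{ij} = 0 in A. -/
open Matrix

/-- A matrix `u` over a (unital, associative) ring is a *magic matrix* if
`u i j * u i k = δ_{jk} u i j`, `u j i * u k i = δ_{jk} u j i` for all `i j k`,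
and all row sums and column sums equal `1`. -/
def IsMagic {V : Type*} [Fintype V] [DecidableEq V] {A : Type*} [Ring A] (u : Matrix V V A) : Prop :=
  (∀ i j k, u i j * u i k = if j = k then u i j else 0) ∧
  (∀ i j k, u j i * u k i = if j = k then u j i else 0) ∧
  (∀ i, ∑ k, u i k = 1) ∧
  (∀ i, ∑ k, u k i = 1)

/-- **Fulton Criterion (algebraic form).** Let `Γ` be a finite simple graph on `n`
vertices with adjacency matrix `ε`, let `A` be a unital associative `ℂ`-algebra, and
let `u ∈ Mₙ(A)` be a magic matrix commuting with `ε` (the entries of `ε` regarded in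
`A` via the unit). If for some `l ≥ 1` the diagonal entries of `ε^l` satisfy
`(ε^l)_{ii} ≠ (ε^l)_{jj}`, then `u i j = 0` in `A`. -/
theorem fulton_criterion {n : ℕ} (Γ : SimpleGraph (Fin n)) [DecidableRel Γ.Adj]
    (A : Type*) [Ring A] [Algebra ℂ A]
    (u : Matrix (Fin n) (Fin n) A)
    (hmagic : IsMagic u)
    (hcomm : u * Γ.adjMatrix A = Γ.adjMatrix A * u)
    (i j : Fin n) (l : ℕ) (hl : 1 ≤ l)
    (hdiag : (Γ.adjMatrix ℕ ^ l) i i ≠ (Γ.adjMatrix ℕ ^ l) j j) :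
    u i j = 0 := by
  obtain ⟨hrow, hcol, -, -⟩ := hmagic
  set N : Matrix (Fin n) (Fin n) ℕ := Γ.adjMatrix ℕ ^ l with hN
  -- the adjacency matrix over A is the ℕ-adjacency matrix mapped along Nat.cast
  have hmap : Γ.adjMatrix A = ((Nat.castRingHom A).mapMatrix (Γ.adjMatrix ℕ)) := by
    ext a b
    simp [Matrix.map_apply, SimpleGraph.adjMatrix_apply, apply_ite (Nat.cast : ℕ → A)]
  have hMl : Γ.adjMatrix A ^ l = (Nat.castRingHom A).mapMatrix N := by
    rw [hmap, ← map_pow]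
  have hMl' : ∀ a b, (Γ.adjMatrix A ^ l) a b = ((N a b : ℕ) : A) := by
    intro a b; rw [hMl]; rfl
  have hc : u * Γ.adjMatrix A ^ l = Γ.adjMatrix A ^ l * u :=
    (Commute.pow_right hcomm l).eq
  set x : A := (u * Γ.adjMatrix A ^ l) i j with hx
  have key1 : u i j * x = ((N i i : ℕ) : A) * u i j := by
    rw [hx, hc, Matrix.mul_apply, Finset.mul_sum]
    have : ∀ k, u i j * ((Γ.adjMatrix A ^ l) i k * u k j)
        = ((N i k : ℕ) : A) * (u i j * u k j) := by
      intro k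
      rw [hMl' i k, ← mul_assoc, ← (Nat.cast_commute (N i k) (u i j)).eq, mul_assoc]
    rw [Finset.sum_congr rfl fun k _ => this k]
    rw [Finset.sum_eq_single i]
    · rw [hcol, if_pos rfl]
    · intro k _ hki
      rw [hcol, if_neg fun h => hki h.symm, mul_zero]
    · intro h; exact absurd (Finset.mem_univ i) h
  have key2 : x * u i j = ((N j j : ℕ) : A) * u i j := by
    rw [hx, Matrix.mul_apply, Finset.sum_mul]
    have : ∀ k, u i k * (Γ.adjMatrix A ^ l) k j * u i j
        = ((N k j : ℕ) : A) * (u i k * u i j) := by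
      intro k
      rw [hMl' k j, ← (Nat.cast_commute (N k j) (u i k)).eq, mul_assoc]
    rw [Finset.sum_congr rfl fun k _ => this k]
    rw [Finset.sum_eq_single j]
    · rw [hrow, if_pos rfl]
    · intro k _ hkj
      rw [hrow, if_neg hkj, mul_zero]
    · intro h; exact absurd (Finset.mem_univ j) h
  have hidem : u i j * u i j = u i j := by
    have := hrow i j j; simpa using this
  have heq : ((N i i : ℕ) : A) * u i j = ((N j j : ℕ) : A) * u i j := by
    have h1 : u i j * x * u i j = ((N i i : ℕ) : A) * u i j := by
      rw [key1, mul_assoc, hidem]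
    have h2 : u i j * (x * u i j) = ((N j j : ℕ) : A) * u i j := by
      rw [key2, ← mul_assoc, ← (Nat.cast_commute (N j j) (u i j)).eq, mul_assoc, hidem]
    rw [← h1, ← h2, mul_assoc]
  -- pass to ℂ-scalars
  have hsmul : ((N i i : ℂ)) • u i j = ((N j j : ℂ)) • u i j := by
    have e : ∀ m : ℕ, ((m : ℂ)) • u i j = ((m : ℕ) : A) * u i j := by
      intro m
      rw [Nat.cast_smul_eq_nsmul, nsmul_eq_mul]
    rw [e, e, heq]
  have hne : ((N i i : ℂ)) - ((N j j : ℂ)) ≠ 0 := by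
    intro h
    exact hdiag (Nat.cast_inj.mp (sub_eq_zero.mp h : ((N i i : ℕ) : ℂ) = N j j))
  have hzero : (((N i i : ℂ)) - ((N j j : ℂ))) • u i j = 0 := by
    rw [sub_smul, hsmul, sub_self]
  have := congrArg (fun a => (((N i i : ℂ)) - ((N j j : ℂ)))⁻¹ • a) hzero
  simpa [smul_smul, inv_mul_cancel₀ hne] using this
end

section
/- Let σ and τ be disjoint permutations of {1,…,n}, let R be a unital ring, and let p, q ∈ R be idempotents (p² = p, q² = q). Define u ∈ M_n(R) by u_{ij} = δ_{σ(i),j}·p + δ_{τ(i),j}·q + δ_{ij}·(1 − p − q). Then u is a magic matrix: u_{ij} u_{ik} = δ_{jk} u_{ij} and u_{ji} u_{ki} = δ_{jk} u_{ji} for all i, j, k, and every row sum and every column sum of u equals 1. -/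
open Matrix

lemma one_point_row {R : Type*} [Ring R] {ι : Type*} [DecidableEq ι] (s : ι)
    (v : ι → R) (hv : ∀ j, v j = if s = j then (1 : R) else 0) :
    ∀ j k, v j * v k = if j = k then v j else 0 := by
  intro j k
  rw [hv j, hv k]
  split_ifs <;> simp_all

lemma two_point_row {R : Type*} [Ring R] (a : R) (ha : a * a = a)
    {ι : Type*} [DecidableEq ι] (s t : ι) (hst : s ≠ t)
    (v : ι → R) (hv : ∀ j, v j = (if s = j then a else 0) + (if t = j then 1 - a else 0)) :
    ∀ j k, v j * v k = if j = k then v j else 0 := by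
  intro j k
  rw [hv j, hv k]
  split_ifs <;> simp_all [mul_sub, sub_mul, mul_one, one_mul]

lemma inv_fix {n : ℕ} (σ : Equiv.Perm (Fin n)) (i : Fin n) : σ⁻¹ i = i ↔ σ i = i := by
  rw [Equiv.Perm.inv_eq_iff_eq]
  exact eq_comm

lemma magic_row_aux {n : ℕ} (σ τ : Equiv.Perm (Fin n))
    (hdisj : ∀ i, (σ i ≠ i → τ i = i) ∧ (τ i ≠ i → σ i = i))
    (R : Type*) [Ring R] (p q : R) (hp : p * p = p) (hq : q * q = q)
    (u : Matrix (Fin n) (Fin n) R)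
    (hu : ∀ i j, u i j = (if σ i = j then p else 0) + (if τ i = j then q else 0) +
      (if i = j then 1 - p - q else 0)) :
    ∀ i j k, u i j * u i k = if j = k then u i j else 0 := by
  intro i
  by_cases hσ : σ i = i
  · by_cases hτ : τ i = i
    · exact one_point_row i (u i) (fun j => by
        rw [hu i j, hσ, hτ]; split_ifs <;> simp_all)
    · have hσ' := (hdisj i).2 hτ
      exact two_point_row q hq (τ i) i hτ (u i) (fun j => by
        rw [hu i j, hσ']
        by_cases h : τ i = j <;> by_cases h' : i = j <;> simp_all <;> abel)
  · have hτ' := (hdisj i).1 hσ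
    exact two_point_row p hp (σ i) i hσ (u i) (fun j => by
      rw [hu i j, hτ']
      by_cases h : σ i = j <;> by_cases h' : i = j <;> simp_all <;> abel)

lemma magic_row_sum {n : ℕ} (σ τ : Equiv.Perm (Fin n))
    (R : Type*) [Ring R] (p q : R)
    (u : Matrix (Fin n) (Fin n) R)
    (hu : ∀ i j, u i j = (if σ i = j then p else 0) + (if τ i = j then q else 0) +
      (if i = j then 1 - p - q else 0)) :
    ∀ i, ∑ k, u i k = 1 := by
  intro i
  simp only [hu, Finset.sum_add_distrib, Finset.sum_ite_eq, Finset.mem_univ, if_true]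
  abel

/-- Let `σ` and `τ` be disjoint permutations of `{1,…,n}`, let `R` be a unital ring and
let `p, q ∈ R` be idempotents. Then the matrix
`u i j = δ_{σ i, j} p + δ_{τ i, j} q + δ_{i j} (1 - p - q)` is a magic matrix. -/
theorem magic_of_disjoint_permutations {n : ℕ} (σ τ : Equiv.Perm (Fin n))
    (hdisj : ∀ i, (σ i ≠ i → τ i = i) ∧ (τ i ≠ i → σ i = i))
    (R : Type*) [Ring R] (p q : R) (hp : p ^ 2 = p) (hq : q ^ 2 = q)
    (u : Matrix (Fin n) (Fin n) R)
    (hu : ∀ i j, u i j = (if σ i = j then p else 0) + (if τ i = j then q else 0) +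
      (if i = j then 1 - p - q else 0)) :
    IsMagic u := by
  have hp' : p * p = p := by rw [← pow_two]; exact hp
  have hq' : q * q = q := by rw [← pow_two]; exact hq
  have hdisj' : ∀ i, (σ⁻¹ i ≠ i → τ⁻¹ i = i) ∧ (τ⁻¹ i ≠ i → σ⁻¹ i = i) := by
    intro i
    constructor
    · intro h
      rw [inv_fix]
      exact (hdisj i).1 (fun hc => h ((inv_fix σ i).mpr hc))
    · intro h
      rw [inv_fix]
      exact (hdisj i).2 (fun hc => h ((inv_fix τ i).mpr hc))
  have hut : ∀ i j, u.transpose i j = (if σ⁻¹ i = j then p else 0) +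
      (if τ⁻¹ i = j then q else 0) + (if i = j then 1 - p - q else 0) := by
    intro i j
    rw [Matrix.transpose_apply, hu j i]
    have h1 : (σ j = i) = (σ⁻¹ i = j) := by
      apply propext; rw [Equiv.Perm.inv_eq_iff_eq]; exact eq_comm
    have h2 : (τ j = i) = (τ⁻¹ i = j) := by
      apply propext; rw [Equiv.Perm.inv_eq_iff_eq]; exact eq_comm
    have h3 : (j = i) = (i = j) := propext eq_comm
    simp only [h1, h2, h3]
  refine ⟨magic_row_aux σ τ hdisj R p q hp' hq' u hu, ?_, magic_row_sum σ τ R p q u hu, ?_⟩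
  · intro i j k
    exact magic_row_aux σ⁻¹ τ⁻¹ hdisj' R p q hp' hq' u.transpose hut i j k
  · intro i
    exact magic_row_sum σ⁻¹ τ⁻¹ R p q u.transpose hut i
end

section
/- Disjoint Automorphism Criterion (algebraic form): Let Γ be a finite simple graph on n vertices admitting two nontrivial disjoint automorphisms σ and τ. Then there exists a matrix u ∈ M_n(M₂(ℂ)) satisfying the quantum automorphism relations for Γ whose entries do not all commute, i.e. u_{ij} u_{kl} ≠ u_{kl} u_{ij} for some indices i, j, k, l (so the relations defining the quantum automorphism group of Γ admit a non-commutative solution). -/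
/-!
Write `ρ = σ * τ` and weight each vertex by an idempotent `f j`: `p` on the support of `σ`, `q` on
the support of `τ`, `1` elsewhere. The matrix `u i j = [i = ρ j] f j + [i = j] (1 - f j)` is the
permutation matrix of `σ` switched on by `p` on its support, and that of `τ` switched on by `q`.
As `f` is constant on `ρ`-orbits, every row and every column of `u` is built from one pair of
complementary idempotents `e, 1 - e`, which gives the magic relations; the graph relations hold
because `ρ` is an automorphism and each of `σ, τ` fixes the other's support pointwise. Choosing
non-commuting projections `p, q ∈ M₂(ℂ)` gives the non-commuting entries `u (σ a) a = p` and
`u (τ b) b = q`.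
-/

open Matrix

/-- `u` satisfies the quantum automorphism relations for the graph `Γ`:
it is a magic matrix and `u i k * u j l = 0 = u j l * u i k` whenever
`ε_{ij} ≠ ε_{kl}` for the adjacency matrix `ε` of `Γ`. -/
def QuantumRel {V : Type*} [Fintype V] [DecidableEq V] (Γ : SimpleGraph V)
    {A : Type*} [Ring A] (u : Matrix V V A) : Prop :=
  IsMagic u ∧
    ∀ i j k l, ¬ (Γ.Adj i j ↔ Γ.Adj k l) → u i k * u j l = 0 ∧ u j l * u i k = 0

theorem IsIdempotentElem.ite_add_ite_one_sub_mul {A : Type*} [Ring A] {e : A}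
    (he : IsIdempotentElem e) (a b c d : Prop) [Decidable a] [Decidable b] [Decidable c]
    [Decidable d] :
    ((if a then e else 0) + if b then 1 - e else 0) *
        ((if c then e else 0) + if d then 1 - e else 0) =
      (if a ∧ c then e else 0) + if b ∧ d then 1 - e else 0 := by
  split_ifs <;> simp_all [he.eq, he.one_sub.eq, he.mul_one_sub_self, he.one_sub_mul_self]

variable {V A : Type*} [DecidableEq V] [Ring A]

def twistedPermMatrix (ρ : Equiv.Perm V) (f : V → A) : Matrix V V A :=
  Matrix.of fun i j => (if i = ρ j then f j else 0) + if i = j then 1 - f j else 0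

section TwistedPermMatrix

variable {ρ : Equiv.Perm V} {f : V → A}

theorem twistedPermMatrix_apply (i j : V) :
    twistedPermMatrix ρ f i j = (if i = ρ j then f j else 0) + if i = j then 1 - f j else 0 :=
  rfl

theorem twistedPermMatrix_apply' (hρf : ∀ j, f (ρ j) = f j) (i j : V) :
    twistedPermMatrix ρ f i j = (if i = ρ j then f i else 0) + if i = j then 1 - f i else 0 := by
  rw [twistedPermMatrix_apply]
  split_ifs <;> subst_vars <;> simp [hρf]

theorem twistedPermMatrix_apply_of_ne {j : V} (hj : ρ j ≠ j) :
    twistedPermMatrix ρ f (ρ j) j = f j := by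
  simp [twistedPermMatrix_apply, hj]

theorem twistedPermMatrix_apply_eq_zero {i j : V} (h₁ : i ≠ ρ j) (h₂ : i ≠ j) :
    twistedPermMatrix ρ f i j = 0 := by
  simp [twistedPermMatrix_apply, h₁, h₂]

theorem isMagic_twistedPermMatrix [Fintype V] (hf : ∀ j, IsIdempotentElem (f j))
    (hρf : ∀ j, f (ρ j) = f j) : IsMagic (twistedPermMatrix ρ f) := by
  refine ⟨fun i j k => ?_, fun i j k => ?_, fun i => ?_, fun i => ?_⟩
  · rw [twistedPermMatrix_apply' hρf, twistedPermMatrix_apply' hρf,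
      (hf i).ite_add_ite_one_sub_mul]
    rcases eq_or_ne j k with rfl | hjk
    · simp
    · rw [if_neg hjk, if_neg (by rintro ⟨rfl, h⟩; exact hjk (ρ.injective h)),
        if_neg (by rintro ⟨rfl, rfl⟩; exact hjk rfl), add_zero]
  · rw [twistedPermMatrix_apply, twistedPermMatrix_apply, (hf i).ite_add_ite_one_sub_mul]
    rcases eq_or_ne j k with rfl | hjk
    · simp
    · rw [if_neg hjk, if_neg (by rintro ⟨rfl, rfl⟩; exact hjk rfl),
        if_neg (by rintro ⟨rfl, rfl⟩; exact hjk rfl), add_zero]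
  · simp [twistedPermMatrix_apply' hρf, Finset.sum_add_distrib,
      Equiv.sum_comp ρ fun k => if i = k then f i else 0]
  · simp [twistedPermMatrix_apply, Finset.sum_add_distrib]

theorem quantumRel_twistedPermMatrix [Fintype V] (Γ : SimpleGraph V)
    (hρ : ∀ i j, Γ.Adj (ρ i) (ρ j) ↔ Γ.Adj i j) (hf : ∀ j, IsIdempotentElem (f j))
    (hρf : ∀ j, f (ρ j) = f j) (hΓf : ∀ k l, f k ≠ f l → (Γ.Adj (ρ k) l ↔ Γ.Adj k l)) :
    QuantumRel Γ (twistedPermMatrix ρ f) := by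
  have hzero : ∀ i j k l, ¬(Γ.Adj i j ↔ Γ.Adj k l) →
      twistedPermMatrix ρ f i k * twistedPermMatrix ρ f j l = 0 := by
    intro i j k l h
    -- Equal weights: the mixed terms vanish as `e * (1 - e) = 0`. Unequal weights: by `hΓf`
    -- every index pattern of a nonzero term respects adjacency, so one factor vanishes.
    by_cases hkl : f k = f l
    · rw [twistedPermMatrix_apply, twistedPermMatrix_apply, ← hkl,
        (hf k).ite_add_ite_one_sub_mul, if_neg, if_neg, add_zero]
      · rintro ⟨rfl, rfl⟩; exact h Iff.rfl
      · rintro ⟨rfl, rfl⟩; exact h (hρ k l)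
    have hadj : (i = ρ k ∨ i = k) → (j = ρ l ∨ j = l) → (Γ.Adj i j ↔ Γ.Adj k l) := by
      rintro (hi | hi) (hj | hj) <;> rw [hi, hj]
      · exact hρ k l
      · exact hΓf k l hkl
      · rw [Γ.adj_comm, hΓf l k (Ne.symm hkl), Γ.adj_comm]
    by_cases hi : i = ρ k ∨ i = k
    · obtain ⟨hj₁, hj₂⟩ := not_or.1 (mt (hadj hi) h)
      rw [twistedPermMatrix_apply_eq_zero hj₁ hj₂, mul_zero]
    · obtain ⟨hi₁, hi₂⟩ := not_or.1 hi
      rw [twistedPermMatrix_apply_eq_zero hi₁ hi₂, zero_mul]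
  refine ⟨isMagic_twistedPermMatrix hf hρf, fun i j k l h => ⟨hzero i j k l h, hzero j i l k ?_⟩⟩
  rwa [Γ.adj_comm j, Γ.adj_comm l]

end TwistedPermMatrix

namespace Equiv.Perm

variable [Fintype V] {σ τ : Perm V} {x : V}

theorem Disjoint.mul_apply_of_mem_support_left (hd : σ.Disjoint τ) (hx : x ∈ σ.support) :
    (σ * τ) x = σ x := by
  rw [mul_apply, notMem_support.1 (hd.mem_imp hx)]

theorem Disjoint.mul_apply_of_mem_support_right (hd : σ.Disjoint τ) (hx : x ∈ τ.support) :
    (σ * τ) x = τ x := by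
  rw [mul_apply, notMem_support.1 (hd.symm.mem_imp (apply_mem_support.2 hx))]

theorem mul_apply_of_notMem_support (hσ : x ∉ σ.support) (hτ : x ∉ τ.support) :
    (σ * τ) x = x := by
  rw [mul_apply, notMem_support.1 hτ, notMem_support.1 hσ]

end Equiv.Perm

section DisjointAutomorphisms

open Equiv Perm

variable [Fintype V] {σ τ : Perm V} {p q : A}

def supportWeight (σ τ : Perm V) (p q : A) (j : V) : A :=
  if j ∈ σ.support then p else if j ∈ τ.support then q else 1

theorem supportWeight_of_mem_left {j : V} (hj : j ∈ σ.support) : supportWeight σ τ p q j = p :=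
  if_pos hj

theorem supportWeight_of_mem_right (hd : σ.Disjoint τ) {j : V} (hj : j ∈ τ.support) :
    supportWeight σ τ p q j = q := by
  rw [supportWeight, if_neg (hd.symm.mem_imp hj), if_pos hj]

theorem isIdempotentElem_supportWeight (hp : IsIdempotentElem p) (hq : IsIdempotentElem q)
    (j : V) : IsIdempotentElem (supportWeight σ τ p q j) := by
  unfold supportWeight
  split_ifs
  exacts [hp, hq, .one]

theorem supportWeight_mul_apply (hd : σ.Disjoint τ) (j : V) :
    supportWeight σ τ p q ((σ * τ) j) = supportWeight σ τ p q j := by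
  by_cases hσj : j ∈ σ.support
  · rw [hd.mul_apply_of_mem_support_left hσj, supportWeight_of_mem_left hσj,
      supportWeight_of_mem_left (apply_mem_support.2 hσj)]
  by_cases hτj : j ∈ τ.support
  · rw [hd.mul_apply_of_mem_support_right hτj, supportWeight_of_mem_right hd hτj,
      supportWeight_of_mem_right hd (apply_mem_support.2 hτj)]
  rw [mul_apply_of_notMem_support hσj hτj]

theorem adj_mul_apply_iff_of_supportWeight_ne (Γ : SimpleGraph V)
    (hσ : ∀ i j, Γ.Adj (σ i) (σ j) ↔ Γ.Adj i j) (hτ : ∀ i j, Γ.Adj (τ i) (τ j) ↔ Γ.Adj i j)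
    (hd : σ.Disjoint τ) {k l : V} (hkl : supportWeight σ τ p q k ≠ supportWeight σ τ p q l) :
    Γ.Adj ((σ * τ) k) l ↔ Γ.Adj k l := by
  by_cases hσk : k ∈ σ.support
  · have hσl : l ∉ σ.support := fun hσl =>
      hkl (by rw [supportWeight_of_mem_left hσk, supportWeight_of_mem_left hσl])
    rw [hd.mul_apply_of_mem_support_left hσk, ← hσ k l, notMem_support.1 hσl]
  by_cases hτk : k ∈ τ.support
  · have hτl : l ∉ τ.support := fun hτl =>
      hkl (by rw [supportWeight_of_mem_right hd hτk, supportWeight_of_mem_right hd hτl])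
    rw [hd.mul_apply_of_mem_support_right hτk, ← hτ k l, notMem_support.1 hτl]
  rw [mul_apply_of_notMem_support hσk hτk]

theorem quantumRel_twistedPermMatrix_supportWeight (Γ : SimpleGraph V)
    (hσ : ∀ i j, Γ.Adj (σ i) (σ j) ↔ Γ.Adj i j) (hτ : ∀ i j, Γ.Adj (τ i) (τ j) ↔ Γ.Adj i j)
    (hd : σ.Disjoint τ) (hp : IsIdempotentElem p) (hq : IsIdempotentElem q) :
    QuantumRel Γ (twistedPermMatrix (σ * τ) (supportWeight σ τ p q)) :=
  quantumRel_twistedPermMatrix Γ (fun i j => (hσ _ _).trans (hτ i j))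
    (isIdempotentElem_supportWeight hp hq) (supportWeight_mul_apply hd)
    fun _ _ => adj_mul_apply_iff_of_supportWeight_ne Γ hσ hτ hd

theorem twistedPermMatrix_supportWeight_apply_left (hd : σ.Disjoint τ) {a : V}
    (ha : a ∈ σ.support) : twistedPermMatrix (σ * τ) (supportWeight σ τ p q) (σ a) a = p := by
  rw [← hd.mul_apply_of_mem_support_left ha, twistedPermMatrix_apply_of_ne,
    supportWeight_of_mem_left ha]
  rwa [hd.mul_apply_of_mem_support_left ha, ← mem_support]

theorem twistedPermMatrix_supportWeight_apply_right (hd : σ.Disjoint τ) {b : V}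
    (hb : b ∈ τ.support) : twistedPermMatrix (σ * τ) (supportWeight σ τ p q) (τ b) b = q := by
  rw [← hd.mul_apply_of_mem_support_right hb, twistedPermMatrix_apply_of_ne,
    supportWeight_of_mem_right hd hb]
  rwa [hd.mul_apply_of_mem_support_right hb, ← mem_support]

end DisjointAutomorphisms

theorem exists_isIdempotentElem_mul_ne_mul :
    ∃ p q : Matrix (Fin 2) (Fin 2) ℂ, IsIdempotentElem p ∧ IsIdempotentElem q ∧ p * q ≠ q * p := by
  refine ⟨!![1, 0; 0, 0], !![1 / 2, 1 / 2; 1 / 2, 1 / 2], ?_, ?_, ?_⟩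
  · rw [IsIdempotentElem, mul_fin_two]; norm_num
  · rw [IsIdempotentElem, mul_fin_two]; norm_num
  · intro h
    have := congrFun₂ h 0 1
    norm_num [mul_fin_two] at this

/-- **Disjoint Automorphism Criterion (algebraic form).** If a finite simple graph `Γ`
on `n` vertices admits two nontrivial disjoint automorphisms `σ` and `τ`, then there is
a matrix `u ∈ Mₙ(M₂(ℂ))` satisfying the quantum automorphism relations for `Γ` whose
entries do not all commute. -/
theorem disjoint_automorphism_criterion {n : ℕ} (Γ : SimpleGraph (Fin n))
    (σ τ : Equiv.Perm (Fin n))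
    (hσ : ∀ i j, Γ.Adj (σ i) (σ j) ↔ Γ.Adj i j)
    (hτ : ∀ i j, Γ.Adj (τ i) (τ j) ↔ Γ.Adj i j)
    (hσ1 : σ ≠ 1) (hτ1 : τ ≠ 1)
    (hdisj : ∀ i, (σ i ≠ i → τ i = i) ∧ (τ i ≠ i → σ i = i)) :
    ∃ u : Matrix (Fin n) (Fin n) (Matrix (Fin 2) (Fin 2) ℂ),
      QuantumRel Γ u ∧ ∃ i j k l, u i j * u k l ≠ u k l * u i j := by
  have hd : σ.Disjoint τ := fun i => or_iff_not_imp_left.2 (hdisj i).1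
  obtain ⟨a, ha⟩ := Finset.nonempty_iff_ne_empty.2 (mt Equiv.Perm.support_eq_empty_iff.1 hσ1)
  obtain ⟨b, hb⟩ := Finset.nonempty_iff_ne_empty.2 (mt Equiv.Perm.support_eq_empty_iff.1 hτ1)
  obtain ⟨p, q, hp, hq, hpq⟩ := exists_isIdempotentElem_mul_ne_mul
  refine ⟨_, quantumRel_twistedPermMatrix_supportWeight Γ hσ hτ hd hp hq, σ a, a, τ b, b, ?_⟩
  rwa [twistedPermMatrix_supportWeight_apply_left hd ha,
    twistedPermMatrix_supportWeight_apply_right hd hb]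
end

section
/- Let Γ be a finite simple graph with adjacency matrix ε (over the natural numbers), and let i be a vertex. If the connected component of i has exactly one vertex (i is isolated), then (ε⁴)_{ii} = 0. If the connected component of i has exactly two vertices, then (ε⁴)_{ii} = 1. If the connected component of i has at least three vertices, then (ε⁴)_{ii} ≥ 2. In particular, if the connected component of i has exactly two vertices and the connected component of j does not have exactly two vertices, then (ε⁴)_{ii} ≠ (ε⁴)_{jj}. -/
/-!
By symmetry of `ε²`, `(ε⁴)_{ii} = ∑_k ((ε²)_{ik})²`, a sum of squared counts of walks of length
two. An isolated vertex has no such walks. If the component is an edge `{i, b}`, the only closed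
walk of length four from `i` is `i b i b i`. Otherwise either `i` has two neighbours, so
`(ε²)_{ii} = deg i ≥ 2`, or its unique neighbour `b` has a neighbour `c ≠ i`, so `(ε²)_{ii}` and
`(ε²)_{ic}` are both positive.
-/

open Finset

namespace SimpleGraph

variable {V : Type*} {G : SimpleGraph V} {v w : V}

theorem ConnectedComponent.supp_subset_of_forall_adj_mem {s : Set V} (hv : v ∈ s)
    (hs : ∀ u ∈ s, ∀ x, G.Adj u x → x ∈ s) : (G.connectedComponentMk v).supp ⊆ s := by
  intro w hw
  have hvw := (reachable_iff_reflTransGen v w).mp (ConnectedComponent.exact hw).symm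
  clear hw
  induction hvw with
  | refl => exact hv
  | tail _ hadj ih => exact hs _ ih _ hadj

theorem supp_connectedComponentMk_eq_singleton_iff :
    (G.connectedComponentMk v).supp = {v} ↔ G.IsIsolated v := by
  refine ⟨fun h w hvw => G.ne_of_adj hvw ?_, fun h => ?_⟩
  · have hw : w ∈ (G.connectedComponentMk v).supp :=
      ConnectedComponent.mem_supp_of_adj_mem_supp _ ConnectedComponent.connectedComponentMk_mem hvw
    rw [h] at hw
    exact hw.symm
  · refine (ConnectedComponent.supp_subset_of_forall_adj_mem (Set.mem_singleton v) ?_).antisymm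
      (Set.singleton_subset_iff.2 ConnectedComponent.connectedComponentMk_mem)
    rintro u rfl x hux
    exact (h x hux).elim

theorem card_supp_connectedComponentMk_eq_one_iff :
    Nat.card (G.connectedComponentMk v).supp = 1 ↔ G.IsIsolated v := by
  rw [← supp_connectedComponentMk_eq_singleton_iff, Nat.card_coe_set_eq, Set.ncard_eq_one]
  refine ⟨?_, fun h => ⟨v, h⟩⟩
  rintro ⟨a, ha⟩
  obtain rfl : v = a := Set.mem_singleton_iff.1 (ha ▸ ConnectedComponent.connectedComponentMk_mem)
  exact ha

theorem neighborSet_eq_of_supp_connectedComponentMk_eq_pair (hvw : v ≠ w)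
    (h : (G.connectedComponentMk v).supp = {v, w}) : G.neighborSet v = {w} := by
  have hsub : G.neighborSet v ⊆ {w} := fun x hx => by
    have hx' : x ∈ (G.connectedComponentMk v).supp :=
      ConnectedComponent.mem_supp_of_adj_mem_supp _ ConnectedComponent.connectedComponentMk_mem hx
    rw [h] at hx'
    exact hx'.resolve_left (G.ne_of_adj hx).symm
  have hne : (G.neighborSet v).Nonempty := by
    rw [neighborSet_nonempty, ← supp_connectedComponentMk_eq_singleton_iff, h]
    exact fun hv => hvw (Set.mem_singleton_iff.1 (hv ▸ Set.mem_insert_of_mem v rfl)).symm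
  exact hne.subset_singleton_iff.1 hsub

theorem supp_connectedComponentMk_eq_pair_iff (hvw : v ≠ w) :
    (G.connectedComponentMk v).supp = {v, w} ↔
      G.neighborSet v = {w} ∧ G.neighborSet w = {v} := by
  refine ⟨fun h => ⟨neighborSet_eq_of_supp_connectedComponentMk_eq_pair hvw h, ?_⟩,
    fun ⟨hv, hw⟩ => ?_⟩
  · have hc : G.connectedComponentMk w = G.connectedComponentMk v :=
      (h ▸ Set.mem_insert_of_mem v rfl : w ∈ (G.connectedComponentMk v).supp)
    exact neighborSet_eq_of_supp_connectedComponentMk_eq_pair hvw.symm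
      (by rw [hc, h, Set.pair_comm])
  · refine (ConnectedComponent.supp_subset_of_forall_adj_mem (Set.mem_insert v {w}) ?_).antisymm ?_
    · rintro u (rfl | rfl) x hux
      · exact Or.inr ((Set.eq_singleton_iff_unique_mem.1 hv).2 x hux)
      · exact Or.inl ((Set.eq_singleton_iff_unique_mem.1 hw).2 x hux)
    · have hvw' : G.Adj v w := (hv.symm ▸ rfl : w ∈ G.neighborSet v)
      exact Set.insert_subset_iff.2 ⟨ConnectedComponent.connectedComponentMk_mem,
        Set.singleton_subset_iff.2 (ConnectedComponent.mem_supp_of_adj_mem_supp _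
          ConnectedComponent.connectedComponentMk_mem hvw')⟩

theorem card_supp_connectedComponentMk_eq_two_iff :
    Nat.card (G.connectedComponentMk v).supp = 2 ↔
      ∃ w, G.neighborSet v = {w} ∧ G.neighborSet w = {v} := by
  rw [Nat.card_coe_set_eq, Set.ncard_eq_two]
  constructor
  · rintro ⟨a, b, hab, h⟩
    rcases (h ▸ ConnectedComponent.connectedComponentMk_mem : v ∈ ({a, b} : Set V)) with rfl | rfl
    · exact ⟨b, (supp_connectedComponentMk_eq_pair_iff hab).1 h⟩
    · exact ⟨a, (supp_connectedComponentMk_eq_pair_iff hab.symm).1 (h.trans (Set.pair_comm a v))⟩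
  · rintro ⟨w, hN⟩
    have hvw : v ≠ w := G.ne_of_adj (hN.1.symm ▸ rfl : w ∈ G.neighborSet v)
    exact ⟨v, w, hvw, (supp_connectedComponentMk_eq_pair_iff hvw).2 hN⟩

section AdjMatrix

variable [Fintype V] [DecidableEq V] [DecidableRel G.Adj] {α : Type*}

theorem adjMatrix_pow_succ_apply_eq_zero_of_isIsolated [Semiring α] (h : G.IsIsolated v)
    (n : ℕ) (w : V) : (G.adjMatrix α ^ (n + 1)) v w = 0 := by
  rw [pow_succ', adjMatrix_mul_apply, (G.neighborFinset_eq_empty v).2 h, sum_empty]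

theorem adjMatrix_pow_four_apply_self_eq_one [Semiring α] (hv : G.neighborSet v = {w})
    (hw : G.neighborSet w = {v}) : (G.adjMatrix α ^ 4) v v = 1 := by
  have hv' : G.neighborFinset v = {w} := by rw [← coe_inj, coe_neighborFinset, hv, coe_singleton]
  have hw' : G.neighborFinset w = {v} := by rw [← coe_inj, coe_neighborFinset, hw, coe_singleton]
  calc (G.adjMatrix α ^ 4) v v
      = (G.adjMatrix α * (G.adjMatrix α * G.adjMatrix α) * G.adjMatrix α) v v := by
        rw [pow_succ, pow_succ', sq]
    _ = (G.adjMatrix α * G.adjMatrix α) w w := by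
        rw [mul_adjMatrix_apply, hv', sum_singleton, adjMatrix_mul_apply, hv', sum_singleton]
    _ = 1 := by
        rw [adjMatrix_mul_self_apply_self, ← card_neighborFinset_eq_degree, hw', card_singleton,
          Nat.cast_one]

theorem adjMatrix_pow_four_apply_self_eq_sum_sq [CommSemiring α] :
    (G.adjMatrix α ^ 4) v v = ∑ u, (G.adjMatrix α ^ 2) v u ^ 2 := by
  rw [show 4 = 2 + 2 from rfl, pow_add, Matrix.mul_apply]
  refine sum_congr rfl fun u _ => ?_
  rw [(G.isSymm_adjMatrix.pow 2).apply u v]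
  exact (sq _).symm

theorem one_le_adjMatrix_sq_apply {u x : V} (huv : G.Adj u v) (hvx : G.Adj v x) :
    1 ≤ (G.adjMatrix ℕ ^ 2) u x := by
  rw [sq, adjMatrix_mul_apply]
  calc 1 = G.adjMatrix ℕ v x := by simp [hvx]
    _ ≤ _ := single_le_sum (f := fun y => G.adjMatrix ℕ y x) (fun _ _ => Nat.zero_le _)
        ((G.mem_neighborFinset u v).2 huv)

theorem two_le_adjMatrix_pow_four_apply_self_of_two_le_degree (h : 2 ≤ G.degree v) :
    2 ≤ (G.adjMatrix ℕ ^ 4) v v := by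
  rw [adjMatrix_pow_four_apply_self_eq_sum_sq]
  calc 2 ≤ (G.adjMatrix ℕ ^ 2) v v ^ 2 := by
        rw [sq (G.adjMatrix ℕ), adjMatrix_mul_self_apply_self, Nat.cast_id]
        exact h.trans (Nat.le_self_pow two_ne_zero _)
    _ ≤ _ := single_le_sum (f := fun u => (G.adjMatrix ℕ ^ 2) v u ^ 2)
        (fun _ _ => Nat.zero_le _) (mem_univ v)

theorem two_le_adjMatrix_pow_four_apply_self_of_adj_of_adj {a b : V} (ha : G.Adj v a)
    (hab : G.Adj a b) (hbv : b ≠ v) : 2 ≤ (G.adjMatrix ℕ ^ 4) v v := by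
  rw [adjMatrix_pow_four_apply_self_eq_sum_sq]
  calc 2 ≤ (G.adjMatrix ℕ ^ 2) v v ^ 2 + (G.adjMatrix ℕ ^ 2) v b ^ 2 :=
        add_le_add (one_le_pow₀ (one_le_adjMatrix_sq_apply ha ha.symm))
          (one_le_pow₀ (one_le_adjMatrix_sq_apply ha hab))
    _ = ∑ u ∈ {v, b}, (G.adjMatrix ℕ ^ 2) v u ^ 2 :=
        (sum_pair (f := fun u => (G.adjMatrix ℕ ^ 2) v u ^ 2) hbv.symm).symm
    _ ≤ _ := sum_le_sum_of_subset (subset_univ _)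

theorem two_le_adjMatrix_pow_four_apply_self_of_three_le_card
    (h : 3 ≤ Nat.card (G.connectedComponentMk v).supp) : 2 ≤ (G.adjMatrix ℕ ^ 4) v v := by
  obtain ⟨a, hva⟩ : ∃ a, G.Adj v a := exists_adj_iff_not_isIsolated.2 fun hv => by
    have := card_supp_connectedComponentMk_eq_one_iff.2 hv
    omega
  by_cases hNv : G.neighborSet v = {a}
  · obtain ⟨b, hab, hbv⟩ : ∃ b, G.Adj a b ∧ b ≠ v := by
      by_contra! hNa
      have := card_supp_connectedComponentMk_eq_two_iff.2
        ⟨a, hNv, Set.eq_singleton_iff_unique_mem.2 ⟨hva.symm, hNa⟩⟩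
      omega
    exact two_le_adjMatrix_pow_four_apply_self_of_adj_of_adj hva hab hbv
  · obtain ⟨b, hvb, hba⟩ : ∃ b, G.Adj v b ∧ b ≠ a := by
      by_contra! hNv'
      exact hNv (Set.eq_singleton_iff_unique_mem.2 ⟨hva, hNv'⟩)
    refine two_le_adjMatrix_pow_four_apply_self_of_two_le_degree ?_
    rw [← card_neighborFinset_eq_degree]
    exact one_lt_card.2 ⟨a, (G.mem_neighborFinset v a).2 hva, b, (G.mem_neighborFinset v b).2 hvb,
      hba.symm⟩

end AdjMatrix

end SimpleGraph

/-- Let `Γ` be a finite simple graph with adjacency matrix `ε` over `ℕ` and let `i` be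
a vertex. If the connected component of `i` has exactly one vertex then `(ε⁴)_{ii} = 0`;
if it has exactly two vertices then `(ε⁴)_{ii} = 1`; if it has at least three vertices
then `(ε⁴)_{ii} ≥ 2`. In particular, if the component of `i` has exactly two vertices
and the component of `j` does not, then `(ε⁴)_{ii} ≠ (ε⁴)_{jj}`. -/
theorem adjMatrix_pow_four_diag {V : Type*} [Fintype V] [DecidableEq V]
    (Γ : SimpleGraph V) [DecidableRel Γ.Adj] (i j : V) :
    (Nat.card ((Γ.connectedComponentMk i).supp) = 1 → (Γ.adjMatrix ℕ ^ 4) i i = 0) ∧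
    (Nat.card ((Γ.connectedComponentMk i).supp) = 2 → (Γ.adjMatrix ℕ ^ 4) i i = 1) ∧
    (3 ≤ Nat.card ((Γ.connectedComponentMk i).supp) → 2 ≤ (Γ.adjMatrix ℕ ^ 4) i i) ∧
    (Nat.card ((Γ.connectedComponentMk i).supp) = 2 →
      Nat.card ((Γ.connectedComponentMk j).supp) ≠ 2 →
      (Γ.adjMatrix ℕ ^ 4) i i ≠ (Γ.adjMatrix ℕ ^ 4) j j) := by
  have card_one : ∀ v, Nat.card (Γ.connectedComponentMk v).supp = 1 →
      (Γ.adjMatrix ℕ ^ 4) v v = 0 := fun v h =>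
    Γ.adjMatrix_pow_succ_apply_eq_zero_of_isIsolated
      (Γ.card_supp_connectedComponentMk_eq_one_iff.1 h) 3 v
  have card_two : ∀ v, Nat.card (Γ.connectedComponentMk v).supp = 2 →
      (Γ.adjMatrix ℕ ^ 4) v v = 1 := fun v h =>
    have ⟨_, hv, hw⟩ := Γ.card_supp_connectedComponentMk_eq_two_iff.1 h
    Γ.adjMatrix_pow_four_apply_self_eq_one hv hw
  refine ⟨card_one i, card_two i, Γ.two_le_adjMatrix_pow_four_apply_self_of_three_le_card,
    fun hi hj => ?_⟩
  have hj_pos : 0 < Nat.card (Γ.connectedComponentMk j).supp :=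
    have := (Γ.connectedComponentMk j).nonempty_supp.to_subtype
    Nat.card_pos
  rw [card_two i hi]
  obtain hj1 | hj3 : Nat.card (Γ.connectedComponentMk j).supp = 1 ∨
      3 ≤ Nat.card (Γ.connectedComponentMk j).supp := by omega
  · simp [card_one j hj1]
  · have := Γ.two_le_adjMatrix_pow_four_apply_self_of_three_le_card hj3
    omega
end

section
/- Let Γ₀ be either K₁ (a single vertex) or K₂ (two vertices joined by an edge). Let Γ₁ be the disjoint union of m ≥ 1 copies of Γ₀, let Γ₂ be a finite simple graph none of whose connected components is isomorphic to Γ₀, and let Γ = Γ₁ ⊔ Γ₂, on n vertices with adjacency matrix ε. Then for every unital associative ℂ-algebra A and every matrix u ∈ M_n(A) satisfying the quantum automorphism relations for Γ, one has u_{ij} = 0 whenever i is a vertex of Γ₁ and j is a vertex of Γ₂, and also whenever i is a vertex of Γ₂ and j is a vertex of Γ₁ (i.e. u is block diagonal with respect to the decomposition of the vertex set). -/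
/-!
If `u i k ≠ 0`, then `i` and `k` have the same local type: `i` is isolated iff `k` is, and `i`
is an end of an isolated edge iff `k` is. Both come from expanding `u i k = ∑ j, u i k * u j l`
along an edge `k ~ l`: the relations kill every term with `j` not adjacent to `i`. Every vertex
of `Γ₁` has the local type of `Γ₀`, and a vertex of `Γ₂` with that type would make its component
isomorphic to `Γ₀`, so `u` has no nonzero entry between the two blocks.
-/

open Matrix

/-- The disjoint union of `m` copies of a graph `Γ₀`. -/
def copies (m : ℕ) {V₀ : Type*} (Γ₀ : SimpleGraph V₀) : SimpleGraph (Fin m × V₀) where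
  Adj a b := a.1 = b.1 ∧ Γ₀.Adj a.2 b.2
  symm := ⟨by intro a b h; exact ⟨h.1.symm, h.2.symm⟩⟩
  loopless := ⟨by intro a h; exact Γ₀.loopless.irrefl _ h.2⟩

namespace SimpleGraph

variable {V W : Type*} {G : SimpleGraph V} {H : SimpleGraph W}

def IsIsolatedEdge (G : SimpleGraph V) (v v' : V) : Prop :=
  ∀ x, (G.Adj v x ↔ x = v') ∧ (G.Adj v' x ↔ x = v)

lemma IsIsolatedEdge.adj {v v' : V} (h : G.IsIsolatedEdge v v') : G.Adj v v' :=
  ((h v').1).2 rfl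

lemma Iso.isIsolatedEdge_iff {G' : SimpleGraph W} (e : G ≃g G') {v v' : V} :
    G'.IsIsolatedEdge (e v) (e v') ↔ G.IsIsolatedEdge v v' := by
  simp [IsIsolatedEdge, e.surjective.forall, e.map_adj_iff]

lemma exists_isIsolatedEdge_of_iso_top_fin_two (e : G ≃g (⊤ : SimpleGraph (Fin 2))) (v : V) :
    ∃ v', G.IsIsolatedEdge v v' := by
  have htop : ∀ i : Fin 2, (⊤ : SimpleGraph (Fin 2)).IsIsolatedEdge i (i + 1) := by
    unfold IsIsolatedEdge; decide
  exact ⟨e.symm (e v + 1), e.isIsolatedEdge_iff.mp (by simpa using htop (e v))⟩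

@[simp] lemma sum_isIsolated_inl {v : V} : (G ⊕g H).IsIsolated (.inl v) ↔ G.IsIsolated v := by
  simp [IsIsolated]

@[simp] lemma sum_isIsolated_inr {w : W} : (G ⊕g H).IsIsolated (.inr w) ↔ H.IsIsolated w := by
  simp [IsIsolated]

lemma sum_isIsolatedEdge_inl {v v' : V} :
    (G ⊕g H).IsIsolatedEdge (.inl v) (.inl v') ↔ G.IsIsolatedEdge v v' := by
  simp [IsIsolatedEdge]

lemma IsIsolatedEdge.of_sum_inr {w : W} {x : V ⊕ W} (h : (G ⊕g H).IsIsolatedEdge (.inr w) x) :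
    ∃ w', H.IsIsolatedEdge w w' := by
  obtain ⟨w', rfl⟩ : ∃ w', x = .inr w' := by
    cases x with
    | inl v => simpa using h.adj
    | inr w' => exact ⟨w', rfl⟩
  exact ⟨w', fun y => by simpa using h (.inr y)⟩

lemma connectedComponentMk_supp_eq {S : Set V} {v : V} (hv : v ∈ S) (hS : G.IsClique S)
    (hclosed : ∀ x ∈ S, ∀ y, G.Adj x y → y ∈ S) : (G.connectedComponentMk v).supp = S := by
  ext x
  rw [ConnectedComponent.mem_supp_iff, ConnectedComponent.eq, reachable_comm]
  constructor
  · rw [reachable_iff_reflTransGen]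
    intro hvx
    induction hvx with
    | refl => exact hv
    | tail _ hyz ih => exact hclosed _ ih _ hyz
  · intro hx
    obtain rfl | hvx := eq_or_ne v x
    · rfl
    · exact (hS hv hx hvx).reachable

lemma nonempty_induce_supp_iso_top [Finite V] {S : Set V} {v : V} {n : ℕ} (hv : v ∈ S)
    (hS : G.IsClique S) (hclosed : ∀ x ∈ S, ∀ y, G.Adj x y → y ∈ S) (hcard : S.ncard = n) :
    Nonempty (G.induce (G.connectedComponentMk v).supp ≃g (⊤ : SimpleGraph (Fin n))) := by
  rw [connectedComponentMk_supp_eq hv hS hclosed, induce_eq_top.mpr hS]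
  exact ⟨Iso.completeGraph (Finite.equivFinOfCardEq hcard)⟩

lemma IsIsolated.nonempty_induce_supp_iso [Finite V] {v : V} (hv : G.IsIsolated v) :
    Nonempty (G.induce (G.connectedComponentMk v).supp ≃g (⊤ : SimpleGraph (Fin 1))) :=
  nonempty_induce_supp_iso_top (Set.mem_singleton v) (isClique_singleton v)
    (fun _ hx y hxy => absurd (Set.mem_singleton_iff.mp hx ▸ hxy) (hv y)) (Set.ncard_singleton v)

lemma IsIsolatedEdge.nonempty_induce_supp_iso [Finite V] {v v' : V} (h : G.IsIsolatedEdge v v') :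
    Nonempty (G.induce (G.connectedComponentMk v).supp ≃g (⊤ : SimpleGraph (Fin 2))) := by
  refine nonempty_induce_supp_iso_top (Set.mem_insert v {v'})
    (isClique_pair.mpr fun _ => h.adj) ?_ (Set.ncard_pair h.adj.ne)
  rintro x (rfl | rfl) y hxy
  · exact .inr ((h y).1.mp hxy)
  · exact .inl ((h y).2.mp hxy)

end SimpleGraph

open SimpleGraph

@[simp] lemma copies_adj (m : ℕ) {V₀ : Type*} (Γ₀ : SimpleGraph V₀) (a b : Fin m × V₀) :
    (copies m Γ₀).Adj a b ↔ a.1 = b.1 ∧ Γ₀.Adj a.2 b.2 :=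
  Iff.rfl

lemma copies_isIsolated {m : ℕ} {V₀ : Type*} {Γ₀ : SimpleGraph V₀} (t : Fin m) {x : V₀}
    (hx : Γ₀.IsIsolated x) : (copies m Γ₀).IsIsolated (t, x) :=
  fun _ h => hx _ h.2

lemma copies_isIsolatedEdge {m : ℕ} {V₀ : Type*} {Γ₀ : SimpleGraph V₀} (t : Fin m) {x x' : V₀}
    (h : Γ₀.IsIsolatedEdge x x') : (copies m Γ₀).IsIsolatedEdge (t, x) (t, x') := by
  rintro ⟨s, y⟩
  simp [(h y).1, (h y).2, Prod.ext_iff, eq_comm, and_comm]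

namespace QuantumRel

variable {V : Type*} [Fintype V] [DecidableEq V] {Γ : SimpleGraph V} {A : Type*} [Ring A]
  {u : Matrix V V A}

lemma transpose (h : QuantumRel Γ u) : QuantumRel Γ uᵀ :=
  ⟨⟨h.1.2.1, h.1.1, h.1.2.2.2, h.1.2.2.1⟩,
    fun i j k l hne => h.2 k l i j fun hiff => hne hiff.symm⟩

lemma apply_eq_sum_mul (h : QuantumRel Γ u) (i k l : V) : u i k = ∑ j, u i k * u j l := by
  rw [← Finset.mul_sum, h.1.2.2.2 l, mul_one]

lemma mul_eq_zero_of_adj (h : QuantumRel Γ u) {i j k l : V} (hkl : Γ.Adj k l)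
    (hij : ¬Γ.Adj i j) : u i k * u j l = 0 :=
  (h.2 i j k l fun hiff => hij (hiff.mpr hkl)).1

lemma apply_eq_zero_of_isIsolated (h : QuantumRel Γ u) {i k l : V} (hi : Γ.IsIsolated i)
    (hkl : Γ.Adj k l) : u i k = 0 := by
  rw [h.apply_eq_sum_mul i k l]
  exact Finset.sum_eq_zero fun j _ => h.mul_eq_zero_of_adj hkl (hi j)

lemma isIsolated_iff_of_apply_ne_zero (h : QuantumRel Γ u) {i k : V} (hik : u i k ≠ 0) :
    Γ.IsIsolated i ↔ Γ.IsIsolated k :=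
  ⟨fun hi _ hkl => hik (h.apply_eq_zero_of_isIsolated hi hkl),
    fun hk _ hij => hik (h.transpose.apply_eq_zero_of_isIsolated hk hij)⟩

lemma apply_mul_apply_eq_self (h : QuantumRel Γ u) {i i' k l : V}
    (hi : ∀ j, Γ.Adj i j → j = i') (hkl : Γ.Adj k l) : u i k * u i' l = u i k := by
  refine ((h.apply_eq_sum_mul i k l).trans (Finset.sum_eq_single i' ?_ (by simp))).symm
  exact fun j _ hj => h.mul_eq_zero_of_adj hkl fun hij => hj (hi j hij)

-- `u i k` absorbs `u i' l` and `u i' s` on the right, and these are orthogonal unless `s = l`.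
lemma eq_of_adj_of_apply_ne_zero (h : QuantumRel Γ u) {i i' k l s : V}
    (hi : ∀ j, Γ.Adj i j → j = i') (hik : u i k ≠ 0) (hkl : Γ.Adj k l) (hks : Γ.Adj k s) :
    s = l := by
  by_contra hsl
  apply hik
  calc u i k = u i k * u i' s * u i' l := by
        rw [h.apply_mul_apply_eq_self hi hks, h.apply_mul_apply_eq_self hi hkl]
    _ = 0 := by rw [mul_assoc, h.1.1, if_neg hsl, mul_zero]

lemma exists_isIsolatedEdge_of_apply_ne_zero (h : QuantumRel Γ u) {i i' k : V}
    (hi : Γ.IsIsolatedEdge i i') (hik : u i k ≠ 0) : ∃ l, Γ.IsIsolatedEdge k l := by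
  obtain ⟨l, hkl⟩ : ∃ l, Γ.Adj k l := by
    by_contra! hk
    exact (h.isIsolated_iff_of_apply_ne_zero hik).mpr hk _ hi.adj
  have hi'l : u i' l ≠ 0 := fun h0 => hik (by
    rw [← h.apply_mul_apply_eq_self (fun j => ((hi j).1).1) hkl, h0, mul_zero])
  refine ⟨l, fun x => ⟨⟨fun hkx => ?_, fun hx => hx ▸ hkl⟩,
    ⟨fun hlx => ?_, fun hx => hx ▸ hkl.symm⟩⟩⟩
  · exact h.eq_of_adj_of_apply_ne_zero (fun j => ((hi j).1).1) hik hkl hkx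
  · exact h.eq_of_adj_of_apply_ne_zero (fun j => ((hi j).2).1) hi'l hkl.symm hlx

lemma exists_isIsolatedEdge_iff_of_apply_ne_zero (h : QuantumRel Γ u) {i k : V}
    (hik : u i k ≠ 0) : (∃ i', Γ.IsIsolatedEdge i i') ↔ ∃ k', Γ.IsIsolatedEdge k k' :=
  ⟨fun ⟨_, hi⟩ => h.exists_isIsolatedEdge_of_apply_ne_zero hi hik,
    fun ⟨_, hk⟩ => h.transpose.exists_isIsolatedEdge_of_apply_ne_zero hk hik⟩

end QuantumRel

theorem block_diagonal_of_small_components_general {V₀ W : Type*} [Fintype V₀] [DecidableEq V₀]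
    [Fintype W] [DecidableEq W] (Γ₀ : SimpleGraph V₀)
    (h₀ : Nonempty (Γ₀ ≃g (⊥ : SimpleGraph (Fin 1))) ∨
      Nonempty (Γ₀ ≃g (⊤ : SimpleGraph (Fin 2))))
    (m : ℕ)
    (Γ₂ : SimpleGraph W)
    (hΓ₂ : ∀ c : Γ₂.ConnectedComponent, ¬ Nonempty ((Γ₂.induce c.supp) ≃g Γ₀))
    (A : Type*) [Ring A]
    (u : Matrix ((Fin m × V₀) ⊕ W) ((Fin m × V₀) ⊕ W) A)
    (hu : QuantumRel (copies m Γ₀ ⊕g Γ₂) u) :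
    (∀ (a : Fin m × V₀) (w : W), u (Sum.inl a) (Sum.inr w) = 0) ∧
    (∀ (a : Fin m × V₀) (w : W), u (Sum.inr w) (Sum.inl a) = 0) := by
  obtain ⟨P, hP, hl, hr⟩ : ∃ P : (Fin m × V₀) ⊕ W → Prop, (∀ i k, u i k ≠ 0 → (P i ↔ P k)) ∧
      (∀ a, P (.inl a)) ∧ ∀ w, ¬P (.inr w) := by
    rcases h₀ with ⟨⟨e⟩⟩ | ⟨⟨e⟩⟩
    · refine ⟨(copies m Γ₀ ⊕g Γ₂).IsIsolated, fun i k => hu.isIsolated_iff_of_apply_ne_zero,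
        fun ⟨t, x⟩ => ?_, fun w hw => ?_⟩
      · exact sum_isIsolated_inl.mpr (copies_isIsolated t fun y hxy => e.map_adj_iff.mpr hxy)
      · obtain ⟨f⟩ := (sum_isIsolated_inr.mp hw).nonempty_induce_supp_iso
        exact hΓ₂ _ ⟨f.trans (Subsingleton.elim (⊤ : SimpleGraph (Fin 1)) ⊥ ▸ e.symm)⟩
    · refine ⟨fun v => ∃ v', (copies m Γ₀ ⊕g Γ₂).IsIsolatedEdge v v',
        fun i k => hu.exists_isIsolatedEdge_iff_of_apply_ne_zero, fun ⟨t, x⟩ => ?_, ?_⟩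
      · obtain ⟨x', hx⟩ := exists_isIsolatedEdge_of_iso_top_fin_two e x
        exact ⟨.inl (t, x'), sum_isIsolatedEdge_inl.mpr (copies_isIsolatedEdge t hx)⟩
      · rintro w ⟨_, hw⟩
        obtain ⟨w', hw'⟩ := hw.of_sum_inr
        obtain ⟨f⟩ := hw'.nonempty_induce_supp_iso
        exact hΓ₂ _ ⟨f.trans e.symm⟩
  exact ⟨fun a w => by_contra fun h => hr w ((hP _ _ h).mp (hl a)),
    fun a w => by_contra fun h => hr w ((hP _ _ h).mpr (hl a))⟩

/-- Let `Γ₀` be `K₁` or `K₂`, let `Γ₁` be the disjoint union of `m ≥ 1` copies of `Γ₀`,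
let `Γ₂` be a finite simple graph none of whose connected components is isomorphic to
`Γ₀`, and let `Γ = Γ₁ ⊔ Γ₂`. Then any matrix `u` satisfying the quantum automorphism
relations for `Γ` is block diagonal: `u i j = 0` whenever exactly one of `i, j` is a
vertex of `Γ₁`. -/
theorem block_diagonal_of_small_components {V₀ W : Type*} [Fintype V₀] [DecidableEq V₀]
    [Fintype W] [DecidableEq W] (Γ₀ : SimpleGraph V₀)
    (h₀ : Nonempty (Γ₀ ≃g (⊥ : SimpleGraph (Fin 1))) ∨
      Nonempty (Γ₀ ≃g (⊤ : SimpleGraph (Fin 2))))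
    (m : ℕ) (hm : 1 ≤ m)
    (Γ₂ : SimpleGraph W)
    (hΓ₂ : ∀ c : Γ₂.ConnectedComponent, ¬ Nonempty ((Γ₂.induce c.supp) ≃g Γ₀))
    (A : Type*) [Ring A] [Algebra ℂ A]
    (u : Matrix ((Fin m × V₀) ⊕ W) ((Fin m × V₀) ⊕ W) A)
    (hu : QuantumRel (copies m Γ₀ ⊕g Γ₂) u) :
    (∀ (a : Fin m × V₀) (w : W), u (Sum.inl a) (Sum.inr w) = 0) ∧
    (∀ (a : Fin m × V₀) (w : W), u (Sum.inr w) (Sum.inl a) = 0) :=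
  block_diagonal_of_small_components_general Γ₀ h₀ m Γ₂ hΓ₂ A u hu
end

section
/- There exist self-adjoint idempotents p, q ∈ M₂(ℂ) (p = p* = p², q = q* = q²) with p q ≠ q p, and for any such p, q the 4×4 matrix u over M₂(ℂ) given by u = [[p, 1−p, 0, 0], [1−p, p, 0, 0], [0, 0, q, 1−q], [0, 0, 1−q, q]] is a magic matrix whose entries do not all commute (e.g. u_{11} u_{33} ≠ u_{33} u_{11}). In particular, for n = 4 the magic matrix relations admit a non-commutative solution over a unital ℂ-algebra. -/
open Matrix

/-- There exist self-adjoint idempotents `p, q ∈ M₂(ℂ)` with `p q ≠ q p`, and for any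
such `p, q` the `4 × 4` matrix `u = [[p, 1−p, 0, 0], [1−p, p, 0, 0], [0, 0, q, 1−q],
[0, 0, 1−q, q]]` over `M₂(ℂ)` is a magic matrix whose entries do not all commute
(e.g. `u₁₁ u₃₃ ≠ u₃₃ u₁₁`). In particular, for `n = 4` the magic matrix relations admit
a non-commutative solution over a unital `ℂ`-algebra. -/
theorem magic_matrix_noncommutative_solution :
    (∃ p q : Matrix (Fin 2) (Fin 2) ℂ,
      star p = p ∧ p * p = p ∧ star q = q ∧ q * q = q ∧ p * q ≠ q * p) ∧
    (∀ p q : Matrix (Fin 2) (Fin 2) ℂ,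
      star p = p → p * p = p → star q = q → q * q = q → p * q ≠ q * p →
      ∀ u : Matrix (Fin 4) (Fin 4) (Matrix (Fin 2) (Fin 2) ℂ),
        u = !![p, 1 - p, 0, 0; 1 - p, p, 0, 0; 0, 0, q, 1 - q; 0, 0, 1 - q, q] →
        IsMagic u ∧ u 0 0 * u 2 2 ≠ u 2 2 * u 0 0) := by
  constructor
  · refine ⟨!![1, 0; 0, 0], !![(1:ℂ)/2, 1/2; 1/2, 1/2], ?_, ?_, ?_, ?_, ?_⟩
    · ext i j; fin_cases i <;> fin_cases j <;>
        simp [Matrix.star_apply, Matrix.conjTranspose_apply]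
    · ext i j; fin_cases i <;> fin_cases j <;>
        simp [Matrix.mul_apply, Fin.sum_univ_two]
    · ext i j; fin_cases i <;> fin_cases j <;>
        simp [Matrix.star_apply, Matrix.conjTranspose_apply]
    · ext i j; fin_cases i <;> fin_cases j <;>
        simp [Matrix.mul_apply, Fin.sum_univ_two] <;> norm_num
    · intro h
      have := congrFun (congrFun h 0) 1
      simp [Matrix.mul_apply, Fin.sum_univ_two] at this
  · intro p q hps hp2 hqs hq2 hpq u hu
    subst hu
    have hp1 : p * (1 - p) = 0 := by rw [mul_sub, hp2]; simp
    have hp1' : (1 - p) * p = 0 := by rw [sub_mul, hp2]; simp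
    have hp3 : (1 - p) * (1 - p) = 1 - p := by
      rw [mul_sub, mul_one, hp1', sub_zero]
    have hq1 : q * (1 - q) = 0 := by rw [mul_sub, hq2]; simp
    have hq1' : (1 - q) * q = 0 := by rw [sub_mul, hq2]; simp
    have hq3 : (1 - q) * (1 - q) = 1 - q := by
      rw [mul_sub, mul_one, hq1', sub_zero]
    refine ⟨⟨?_, ?_, ?_, ?_⟩, ?_⟩
    · intro i j k
      fin_cases i <;> fin_cases j <;> fin_cases k <;>
        simp [Matrix.vecHead, Matrix.vecTail, hp2, hp1, hp1', hp3, hq2, hq1, hq1', hq3]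
    · intro i j k
      fin_cases i <;> fin_cases j <;> fin_cases k <;>
        simp [Matrix.vecHead, Matrix.vecTail, hp2, hp1, hp1', hp3, hq2, hq1, hq1', hq3]
    · intro i
      fin_cases i <;> simp [Matrix.vecHead, Matrix.vecTail, Fin.sum_univ_four]
    · intro i
      fin_cases i <;> simp [Matrix.vecHead, Matrix.vecTail, Fin.sum_univ_four]
    · simpa using hpq
end

section
/- Let Γ be a finite simple graph on n vertices with adjacency matrix ε, let A be a unital associative ℂ-algebra, and let u ∈ M_n(A) be a magic matrix. Then u·ε = ε·u in M_n(A) if and only if u_{ik} u_{jl} = 0 and u_{jl} u_{ik} = 0 for all indices i, j, k, l with ε_{ij} ≠ ε_{kl}. -/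
open Matrix

/-- Let `Γ` be a finite simple graph on `n` vertices with adjacency matrix `ε`, let `A`
be a unital associative `ℂ`-algebra and let `u ∈ Mₙ(A)` be a magic matrix. Then
`u ε = ε u` if and only if `u i k * u j l = 0` and `u j l * u i k = 0` for all indices
`i, j, k, l` with `ε_{ij} ≠ ε_{kl}`. -/
theorem commute_adjMatrix_iff {n : ℕ} (Γ : SimpleGraph (Fin n)) [DecidableRel Γ.Adj]
    (A : Type*) [Ring A] [Algebra ℂ A]
    (u : Matrix (Fin n) (Fin n) A) (hu : IsMagic u) :
    u * Γ.adjMatrix A = Γ.adjMatrix A * u ↔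
      ∀ i j k l, ¬ (Γ.Adj i j ↔ Γ.Adj k l) →
        u i k * u j l = 0 ∧ u j l * u i k = 0 := by
  obtain ⟨hr, hc, hrs, hcs⟩ := hu
  constructor
  · intro h i j k l hne
    have key : ∀ a b c d : Fin n,
        (if Γ.Adj c d then u a c * u b d else 0)
          = (if Γ.Adj a b then u a c * u b d else 0) := by
      intro a b c d
      have h1 : u a c * ((u * Γ.adjMatrix A) a d) * u b d
          = (if Γ.Adj c d then u a c * u b d else 0) := by
        rw [mul_apply, Finset.mul_sum]
        have : ∀ m : Fin n, u a c * (u a m * Γ.adjMatrix A m d)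
            = if m = c then u a c * Γ.adjMatrix A c d else 0 := by
          intro m
          rw [← mul_assoc, hr a c m]
          by_cases hm : m = c
          · subst hm; simp
          · simp [Ne.symm hm, hm]
        rw [Finset.sum_congr rfl fun m _ => this m, Finset.sum_ite_eq' Finset.univ c]
        simp only [Finset.mem_univ, if_true, SimpleGraph.adjMatrix_apply]
        by_cases hcd : Γ.Adj c d <;> simp [hcd]
      have h2 : u a c * ((Γ.adjMatrix A * u) a d) * u b d
          = (if Γ.Adj a b then u a c * u b d else 0) := by
        rw [mul_apply, Finset.mul_sum, Finset.sum_mul]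
        have : ∀ m : Fin n, u a c * (Γ.adjMatrix A a m * u m d) * u b d
            = if m = b then (if Γ.Adj a b then u a c * u b d else 0) else 0 := by
          intro m
          rw [SimpleGraph.adjMatrix_apply]
          by_cases ham : Γ.Adj a m
          · rw [if_pos ham, one_mul, mul_assoc, hc d m b]
            by_cases hm : m = b
            · subst hm; simp [ham, mul_assoc]
            · simp [hm]
          · by_cases hm : m = b
            · subst hm; simp [ham]
            · simp [ham, hm]
        rw [Finset.sum_congr rfl fun m _ => this m, Finset.sum_ite_eq' Finset.univ b]
        simp
      rw [← h1, ← h2, h]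
    by_cases hij : Γ.Adj i j
    · have hkl : ¬ Γ.Adj k l := fun hkl => hne ⟨fun _ => hkl, fun _ => hij⟩
      constructor
      · have := key i j k l
        simpa [hij, hkl] using this.symm
      · have := key j i l k
        simpa [Γ.adj_comm l k, Γ.adj_comm j i, hij, hkl] using this.symm
    · have hkl : Γ.Adj k l := by
        by_contra hkl; exact hne ⟨fun h' => absurd h' hij, fun h' => absurd h' hkl⟩
      constructor
      · have := key i j k l
        simpa [hij, hkl] using this
      · have := key j i l k
        simpa [Γ.adj_comm l k, Γ.adj_comm j i, hij, hkl] using this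
  · intro h
    ext i l
    rw [mul_apply, mul_apply]
    have L : ∀ m : Fin n, u i m * Γ.adjMatrix A m l
        = ∑ j, if Γ.Adj m l ∧ Γ.Adj i j then u i m * u j l else 0 := by
      intro m
      rw [SimpleGraph.adjMatrix_apply]
      by_cases hm : Γ.Adj m l
      · rw [if_pos hm, mul_one]
        calc u i m = u i m * ∑ j, u j l := by rw [hcs l, mul_one]
          _ = ∑ j, u i m * u j l := Finset.mul_sum _ _ _
          _ = _ := by
            refine Finset.sum_congr rfl fun j _ => ?_
            by_cases hj : Γ.Adj i j
            · simp [hm, hj]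
            · have := (h i j m l (by simp [hj, hm])).1
              simp [hm, hj, this]
      · simp [hm]
    have R : ∀ j : Fin n, Γ.adjMatrix A i j * u j l
        = ∑ m, if Γ.Adj i j ∧ Γ.Adj m l then u i m * u j l else 0 := by
      intro j
      rw [SimpleGraph.adjMatrix_apply]
      by_cases hj : Γ.Adj i j
      · rw [if_pos hj, one_mul]
        calc u j l = (∑ m, u i m) * u j l := by rw [hrs i, one_mul]
          _ = ∑ m, u i m * u j l := Finset.sum_mul _ _ _
          _ = _ := by
            refine Finset.sum_congr rfl fun m _ => ?_
            by_cases hm : Γ.Adj m l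
            · simp [hm, hj]
            · have := (h i j m l (by simp [hj, hm])).1
              simp [hm, hj, this]
      · simp [hj]
    rw [Finset.sum_congr rfl fun m _ => L m, Finset.sum_congr rfl fun j _ => R j,
      Finset.sum_comm]
    exact Finset.sum_congr rfl fun j _ => Finset.sum_congr rfl fun m _ => if_congr and_comm rfl rfl
end

section
/- For every n ≥ 4, let ε ∈ M_n({0,1}) be the adjacency matrix of the complete graph K_n (ε_{ij} = 1 − δ_{ij}). Then there exists a unital associative ℂ-algebra A and a matrix u ∈ M_n(A) satisfying the quantum automorphism relations for K_n whose entries do not all commute. (Algebraic form of: the complete graph on n ≥ 4 vertices has quantum symmetries, G_aut⁺(K_n) = S_n⁺ ≠ S_n.) -/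
open Matrix

/-- There exist a unital associative `ℂ`-algebra `A` and a matrix `u ∈ Mₙ(A)`
satisfying the quantum automorphism relations for `Γ` whose entries do not all
commute. -/
inductive HasNoncommutativeQuantumSolution {n : ℕ} (Γ : SimpleGraph (Fin n)) : Prop where
  | intro (A : Type) [ringA : Ring A] [algA : Algebra ℂ A]
      (u : Matrix (Fin n) (Fin n) A)
      (rel : QuantumRel Γ u)
      (noncomm : ∃ i j k l, u i j * u k l ≠ u k l * u i j)

namespace QSAux

abbrev M2 := Matrix (Fin 2) (Fin 2) ℂ

noncomputable def p : M2 := !![1, 0; 0, 0]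
noncomputable def q : M2 := !![(1:ℂ)/2, 1/2; 1/2, 1/2]

lemma p_idem : p * p = p := by
  ext i j
  fin_cases i <;> fin_cases j <;>
    simp [p, Matrix.mul_apply, Fin.sum_univ_two]

lemma q_idem : q * q = q := by
  ext i j
  fin_cases i <;> fin_cases j <;>
    (simp [q, Matrix.mul_apply, Fin.sum_univ_two]; ring)

lemma pq_ne_qp : p * q ≠ q * p := by
  intro h
  have := congrFun (congrFun h 0) 1
  simp [p, q, Matrix.mul_apply, Fin.sum_univ_two] at this

def sig (n : ℕ) (hn : 4 ≤ n) (i : Fin n) : Fin n :=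
  if i.val = 0 then ⟨1, by omega⟩ else if i.val = 1 then ⟨0, by omega⟩
  else if i.val = 2 then ⟨3, by omega⟩ else if i.val = 3 then ⟨2, by omega⟩ else i

noncomputable def dd (n : ℕ) (i : Fin n) : M2 :=
  if i.val ≤ 1 then p else if i.val ≤ 3 then q else 1

lemma dd_idem (n : ℕ) (i : Fin n) : dd n i * dd n i = dd n i := by
  unfold dd; split_ifs <;> simp [p_idem, q_idem]

lemma sig_sig (n : ℕ) (hn : 4 ≤ n) (i : Fin n) : sig n hn (sig n hn i) = i := by
  unfold sig
  split_ifs <;> (try rfl) <;> (apply Fin.ext; simp_all)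

lemma dd_sig (n : ℕ) (hn : 4 ≤ n) (i : Fin n) : dd n (sig n hn i) = dd n i := by
  unfold sig dd
  split_ifs <;> simp_all

lemma sig_eq_iff (n : ℕ) (hn : 4 ≤ n) (i j : Fin n) :
    i = sig n hn j ↔ j = sig n hn i := by
  constructor <;> intro h <;> subst h <;> rw [sig_sig]

noncomputable def uu (n : ℕ) (hn : 4 ≤ n) : Matrix (Fin n) (Fin n) M2 :=
  fun i j => (if j = i then dd n i else 0) + (if j = sig n hn i then 1 - dd n i else 0)

lemma uu_col (n : ℕ) (hn : 4 ≤ n) (i j : Fin n) :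
    uu n hn j i = (if j = i then dd n i else 0) + (if j = sig n hn i then 1 - dd n i else 0) := by
  unfold uu
  congr 1
  · by_cases h : j = i
    · subst h; simp
    · rw [if_neg (fun h' => h h'.symm), if_neg h]
  · by_cases h : j = sig n hn i
    · rw [if_pos ((sig_eq_iff n hn i j).mpr h), if_pos h, h, dd_sig]
    · rw [if_neg (fun h' => h ((sig_eq_iff n hn i j).mp h')), if_neg h]

lemma core_prod {n : ℕ} {d : M2} (hd : d * d = d) {i t : Fin n} (j k : Fin n) :
    ((if j = i then d else 0) + (if j = t then 1 - d else 0)) *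
      ((if k = i then d else 0) + (if k = t then 1 - d else 0)) =
    if j = k then ((if j = i then d else 0) + (if j = t then 1 - d else 0)) else 0 := by
  have h1 : d * (1 - d) = 0 := by rw [mul_sub, mul_one, hd, sub_self]
  have h2 : (1 - d) * d = 0 := by rw [sub_mul, one_mul, hd, sub_self]
  have h3 : (1 - d) * (1 - d) = 1 - d := by
    rw [sub_mul, one_mul, mul_sub, mul_one, hd, sub_self, sub_zero]
  split_ifs <;> simp_all [add_mul, mul_add, hd, h1, h2, h3]

lemma row_sum (n : ℕ) (hn : 4 ≤ n) (i : Fin n) : ∑ k, uu n hn i k = 1 := by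
  unfold uu
  rw [Finset.sum_add_distrib]
  simp

lemma col_sum (n : ℕ) (hn : 4 ≤ n) (i : Fin n) : ∑ k, uu n hn k i = 1 := by
  simp only [uu_col]
  rw [Finset.sum_add_distrib]
  simp

lemma row_prod (n : ℕ) (hn : 4 ≤ n) (i j k : Fin n) :
    uu n hn i j * uu n hn i k = if j = k then uu n hn i j else 0 := by
  unfold uu
  exact core_prod (dd_idem n i) j k

lemma col_prod (n : ℕ) (hn : 4 ≤ n) (i j k : Fin n) :
    uu n hn j i * uu n hn k i = if j = k then uu n hn j i else 0 := by
  simp only [uu_col]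
  exact core_prod (dd_idem n i) j k

lemma magic (n : ℕ) (hn : 4 ≤ n) : IsMagic (uu n hn) :=
  ⟨row_prod n hn, col_prod n hn, row_sum n hn, col_sum n hn⟩

end QSAux

/-- For every `n ≥ 4`, the complete graph `K_n` has quantum symmetries: there is a
unital associative `ℂ`-algebra `A` and a matrix `u ∈ Mₙ(A)` satisfying the quantum
automorphism relations for `K_n` whose entries do not all commute. -/
theorem complete_graph_has_quantum_symmetry (n : ℕ) (hn : 4 ≤ n) :
    HasNoncommutativeQuantumSolution (⊤ : SimpleGraph (Fin n)) := by
  refine HasNoncommutativeQuantumSolution.intro QSAux.M2 (QSAux.uu n hn) ?_ ?_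
  · refine ⟨QSAux.magic n hn, fun i j k l h => ?_⟩
    simp only [SimpleGraph.top_adj] at h
    by_cases hij : i = j
    · subst hij
      have hkl : k ≠ l := by tauto
      constructor
      · rw [QSAux.row_prod n hn i k l, if_neg hkl]
      · rw [QSAux.row_prod n hn i l k, if_neg (Ne.symm hkl)]
    · have hkl : k = l := by tauto
      subst hkl
      constructor
      · rw [QSAux.col_prod n hn k i j, if_neg hij]
      · rw [QSAux.col_prod n hn k j i, if_neg (Ne.symm hij)]
  · refine ⟨⟨0, by omega⟩, ⟨0, by omega⟩, ⟨2, by omega⟩, ⟨2, by omega⟩, ?_⟩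
    have h0 : QSAux.uu n hn ⟨0, by omega⟩ ⟨0, by omega⟩ = QSAux.p := by
      unfold QSAux.uu QSAux.sig QSAux.dd
      simp [Fin.ext_iff]
    have h2 : QSAux.uu n hn ⟨2, by omega⟩ ⟨2, by omega⟩ = QSAux.q := by
      unfold QSAux.uu QSAux.sig QSAux.dd
      simp [Fin.ext_iff]
    rw [h0, h2]
    exact QSAux.pq_ne_qp
end

section
/- Let Γ be the simple graph on vertices {1,…,6} with edge set {{1,2},{2,3},{2,4},{3,4},{4,5},{5,6}} and adjacency matrix ε. Then the diagonal entries of ε⁴ are (3, 12, 8, 13, 6, 2), which are pairwise distinct; consequently, for every unital associative ℂ-algebra A, every matrix u ∈ M₆(A) satisfying the quantum automorphism relations for Γ equals the identity matrix: u_{ij} = δ_{ij}·1. (Algebraic form of: this graph has trivial quantum automorphism group.) -/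
open Matrix

/-- The graph on vertices `{1,…,6}` (here `{0,…,5}`) with edges
`{1,2},{2,3},{2,4},{3,4},{4,5},{5,6}` (here `{0,1},{1,2},{1,3},{2,3},{3,4},{4,5}`). -/
def pathTriangleGraph : SimpleGraph (Fin 6) :=
  SimpleGraph.fromRel (fun i j =>
    (i = 0 ∧ j = 1) ∨ (i = 1 ∧ j = 2) ∨ (i = 1 ∧ j = 3) ∨
    (i = 2 ∧ j = 3) ∨ (i = 3 ∧ j = 4) ∨ (i = 4 ∧ j = 5))

instance : DecidableRel pathTriangleGraph.Adj := fun a b =>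
  decidable_of_iff _ (SimpleGraph.fromRel_adj _ a b).symm

/-- Quantum automorphism matrices commute with the adjacency matrix. -/
lemma quantum_comm {V : Type*} [Fintype V] [DecidableEq V] (Γ : SimpleGraph V)
    [DecidableRel Γ.Adj] {A : Type*} [Ring A] (u : Matrix V V A)
    (h : QuantumRel Γ u) : Γ.adjMatrix A * u = u * Γ.adjMatrix A := by
  obtain ⟨⟨_, _, hrow, hcol⟩, hrel⟩ := h
  ext i j
  rw [SimpleGraph.adjMatrix_mul_apply, SimpleGraph.mul_adjMatrix_apply]
  have key : ∀ k l, Γ.Adj i k → ¬ Γ.Adj j l → u k j * u i l = 0 := by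
    intro k l hk hl
    exact (hrel k i j l (by simp [hk.symm, hl])).1
  have key2 : ∀ k l, ¬ Γ.Adj i k → Γ.Adj j l → u k j * u i l = 0 := by
    intro k l hk hl
    exact (hrel k i j l (by rw [iff_true_right hl]; exact fun h' => hk h'.symm)).1
  have hA : ∑ k ∈ Γ.neighborFinset i, u k j
      = ∑ k ∈ Γ.neighborFinset i, ∑ l ∈ Γ.neighborFinset j, u k j * u i l := by
    calc ∑ k ∈ Γ.neighborFinset i, u k j
        = ∑ k ∈ Γ.neighborFinset i, u k j * ∑ l, u i l := by simp [hrow]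
      _ = ∑ k ∈ Γ.neighborFinset i, ∑ l, u k j * u i l := by
          simp [Finset.mul_sum]
      _ = _ := by
          refine Finset.sum_congr rfl fun k hk => ?_
          rw [SimpleGraph.mem_neighborFinset] at hk
          refine (Finset.sum_subset (Finset.subset_univ _) fun l _ hl => ?_).symm
          rw [SimpleGraph.mem_neighborFinset] at hl
          exact key k l hk hl
  have hB : ∑ l ∈ Γ.neighborFinset j, u i l
      = ∑ k ∈ Γ.neighborFinset i, ∑ l ∈ Γ.neighborFinset j, u k j * u i l := by
    calc ∑ l ∈ Γ.neighborFinset j, u i l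
        = ∑ l ∈ Γ.neighborFinset j, (∑ k, u k j) * u i l := by simp [hcol]
      _ = ∑ l ∈ Γ.neighborFinset j, ∑ k, u k j * u i l := by
          simp [Finset.sum_mul]
      _ = ∑ l ∈ Γ.neighborFinset j, ∑ k ∈ Γ.neighborFinset i, u k j * u i l := by
          refine Finset.sum_congr rfl fun l hl => ?_
          rw [SimpleGraph.mem_neighborFinset] at hl
          refine (Finset.sum_subset (Finset.subset_univ _) fun k _ hk => ?_).symm
          rw [SimpleGraph.mem_neighborFinset] at hk
          exact key2 k l hk hl
      _ = _ := Finset.sum_comm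
  rw [hA, hB]

/-- The diagonal entries of `ε⁴` for this graph are `(3, 12, 8, 13, 6, 2)`, which are
pairwise distinct; consequently every matrix `u ∈ M₆(A)` over a unital associative
`ℂ`-algebra `A` satisfying the quantum automorphism relations equals the identity
matrix. (This graph has trivial quantum automorphism group.) -/
theorem pathTriangleGraph_trivial_quantum_automorphisms :
    ((pathTriangleGraph.adjMatrix ℕ ^ 4) 0 0 = 3 ∧
     (pathTriangleGraph.adjMatrix ℕ ^ 4) 1 1 = 12 ∧
     (pathTriangleGraph.adjMatrix ℕ ^ 4) 2 2 = 8 ∧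
     (pathTriangleGraph.adjMatrix ℕ ^ 4) 3 3 = 13 ∧
     (pathTriangleGraph.adjMatrix ℕ ^ 4) 4 4 = 6 ∧
     (pathTriangleGraph.adjMatrix ℕ ^ 4) 5 5 = 2) ∧
    ∀ (A : Type*) [Ring A] [Algebra ℂ A] (u : Matrix (Fin 6) (Fin 6) A),
      QuantumRel pathTriangleGraph u →
      ∀ i j, u i j = if i = j then 1 else 0 := by
  constructor
  · decide
  intro A _ _ u h
  have hdiag : ∀ i j : Fin 6, i ≠ j →
      (pathTriangleGraph.adjMatrix ℕ ^ 4) i i ≠ (pathTriangleGraph.adjMatrix ℕ ^ 4) j j := by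
    decide
  have hQ := h
  obtain ⟨⟨hrowo, hcolo, hrow, hcol⟩, _⟩ := hQ
  -- the adjacency matrix over A is the ℕ one mapped by the cast
  have hmap : (pathTriangleGraph.adjMatrix ℕ).map (Nat.cast : ℕ → A)
      = pathTriangleGraph.adjMatrix A := by
    ext i j
    simp [Matrix.map_apply, SimpleGraph.adjMatrix_apply, apply_ite (Nat.cast : ℕ → A)]
  have hmap4 : ((pathTriangleGraph.adjMatrix ℕ) ^ 4).map (Nat.cast : ℕ → A)
      = (pathTriangleGraph.adjMatrix A) ^ 4 := by
    have := map_pow ((Nat.castRingHom A).mapMatrix) (pathTriangleGraph.adjMatrix ℕ) 4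
    simpa [RingHom.mapMatrix_apply, hmap] using this
  have hc : pathTriangleGraph.adjMatrix A * u = u * pathTriangleGraph.adjMatrix A :=
    quantum_comm _ u h
  have hc4 : (pathTriangleGraph.adjMatrix A) ^ 4 * u = u * (pathTriangleGraph.adjMatrix A) ^ 4 :=
    (Commute.pow_left hc 4)
  set c : Matrix (Fin 6) (Fin 6) ℕ := pathTriangleGraph.adjMatrix ℕ ^ 4 with hcdef
  -- entrywise equation
  have hentry : ∀ i j : Fin 6,
      ∑ k, (c i k : A) * u k j = ∑ k, u i k * (c k j : A) := by
    intro i j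
    have := congrFun (congrFun hc4 i) j
    rw [Matrix.mul_apply, Matrix.mul_apply] at this
    rw [← hmap4] at this
    simpa [Matrix.map_apply] using this
  -- off-diagonal entries vanish
  have hoff : ∀ i j : Fin 6, i ≠ j → u i j = 0 := by
    intro i j hij
    have h1 : u i j * (∑ k, (c i k : A) * u k j) = (c i i : A) * u i j := by
      rw [Finset.mul_sum]
      have : ∀ k, u i j * ((c i k : A) * u k j) = (c i k : A) * (u i j * u k j) := by
        intro k
        rw [← mul_assoc, ← (Nat.cast_commute (c i k) (u i j)).eq, mul_assoc]
      simp_rw [this, hcolo j i]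
      simp
    have h2 : u i j * (∑ k, u i k * (c k j : A)) = (c j j : A) * u i j := by
      rw [Finset.mul_sum]
      simp_rw [← mul_assoc, hrowo i j]
      have : ∀ k, (if j = k then u i j else 0) * (c k j : A)
          = if j = k then (c k j : A) * u i j else 0 := by
        intro k
        split
        · exact ((Nat.cast_commute (c k j) (u i j)).eq).symm
        · simp
      simp_rw [this]
      simp
    have heq : (c i i : A) * u i j = (c j j : A) * u i j := by
      rw [← h1, ← h2, hentry i j]
    have hsmul : ((c i i : ℂ) - (c j j : ℂ)) • u i j = 0 := by
      rw [sub_smul]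
      have e1 : (c i i : ℂ) • u i j = (c i i : A) * u i j := by
        rw [Nat.cast_smul_eq_nsmul, nsmul_eq_mul]
      have e2 : (c j j : ℂ) • u i j = (c j j : A) * u i j := by
        rw [Nat.cast_smul_eq_nsmul, nsmul_eq_mul]
      rw [e1, e2, heq, sub_self]
    have hne : ((c i i : ℂ) - (c j j : ℂ)) ≠ 0 := by
      rw [sub_ne_zero]
      exact_mod_cast hdiag i j hij
    have := inv_smul_smul₀ hne (u i j)
    rw [hsmul, smul_zero] at this
    exact this.symm
  intro i j
  by_cases hij : i = j
  · subst hij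
    simp only [if_pos rfl]
    have := hrow i
    rw [Finset.sum_eq_single i (fun k _ hk => hoff i k (Ne.symm hk)) (by simp)] at this
    exact this
  · simp [hij, hoff i j hij]
end
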